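/- Define S(u) := Li₂(e^{−φ(u)−2u}) − Li₂(e^{φ(u)−2u}) + 2u·φ(u) for real u > κ := (1/2)·arccosh(3/2), where φ(u) := arccosh(cosh(2u) − 1/2) and Li₂ is the dilogarithm. Then S is differentiable on (κ, ∞) and dS/du = 2·log((e^{φ(u)} − e^{−2u})/(1 − e^{φ(u)−2u})) = 2·log ℓ(u). -/

import Mathlib

noncomputable def arcosh (x : ℝ) : ℝ := Real.log (x + Real.sqrt (x^2 - 1))

noncomputable def kappa : ℝ := arcosh (3/2) / 2

noncomputable def phi (ξ : ℝ) : ℝ := arcosh (Real.cosh (2*ξ) - 1/2)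

noncomputable def ell (u : ℝ) : ℝ :=
  Real.cosh (4*u) - Real.cosh (2*u) - 1 +
    Real.sinh (2*u) * Real.sqrt ((2*Real.cosh (2*u)+1) * (2*Real.cosh (2*u)-3))

noncomputable def Li2 (z : ℝ) : ℝ := ∑' n : ℕ, z^n / (n:ℝ)^2

noncomputable def Sfun (u : ℝ) : ℝ :=
  Li2 (Real.exp (-phi u - 2*u)) - Li2 (Real.exp (phi u - 2*u)) + 2*u*(phi u)


/-! With `a = e^{-φ-2u}` and `b = e^{φ-2u}`, the defining relation `cosh φ = cosh 2u - 1/2` is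
equivalent to `(1 - a)(1 - b) = e^{-2u}`. Since `Li₂'(z) = -log(1 - z)/z`, the coefficient of `φ'`
in `S'` is `log(1 - a) + log(1 - b) + 2u = 0`, and what is left is
`2(φ + log(1 - a) - log(1 - b))`. The same relation turns the ratio inside the logarithm into
`e^{φ+2u}(1 - a)² = 2 cosh(φ + 2u) - 2`, which expands to `ℓ(u)`. -/

open Real

lemma arcosh_eq_real_arcosh : _root_.arcosh = Real.arcosh := rfl

lemma norm_natCast_mul_pow_pred_div_sq_le {y r : ℝ} (hyr : |y| ≤ r) (n : ℕ) :
    ‖(n : ℝ) * y ^ (n - 1) / (n : ℝ) ^ 2‖ ≤ r ^ (n - 1) := by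
  rcases n with _ | m
  · simp
  · have hm : (0 : ℝ) < m + 1 := by positivity
    push_cast
    calc ‖(m + 1) * y ^ m / (m + 1) ^ 2‖ = |y| ^ m / (m + 1) := by
          rw [norm_div, norm_mul, norm_pow, norm_pow, Real.norm_eq_abs, Real.norm_eq_abs,
            abs_of_pos hm]
          field_simp
      _ ≤ |y| ^ m := div_le_self (by positivity) (by linarith)
      _ ≤ r ^ m := pow_le_pow_left₀ (abs_nonneg y) hyr m

lemma hasDerivAt_Li2_tsum {z : ℝ} (hz : |z| < 1) :
    HasDerivAt Li2 (∑' n : ℕ, (n : ℝ) * z ^ (n - 1) / (n : ℝ) ^ 2) z := by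
  obtain ⟨r, hzr, hr1⟩ := exists_between hz
  have hr0 : 0 < r := (abs_nonneg z).trans_lt hzr
  refine hasDerivAt_tsum_of_isPreconnected (t := Set.Ioo (-r) r) (y₀ := 0)
    (u := fun n => r ^ (n - 1)) ?_ isOpen_Ioo isPreconnected_Ioo
    (fun n y _ => (hasDerivAt_pow n y).div_const _)
    (fun n y hy => norm_natCast_mul_pow_pred_div_sq_le (abs_le.2 ⟨hy.1.le, hy.2.le⟩) n)
    ⟨neg_lt_zero.2 hr0, hr0⟩ ?_ (abs_lt.1 hzr)
  · exact (summable_nat_add_iff 1).1 (by simpa using summable_geometric_of_lt_one hr0.le hr1)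
  · exact summable_of_ne_finset_zero (s := ∅) (fun n hn => by cases n <;> simp)

lemma hasSum_natCast_mul_pow_pred_div_sq {z : ℝ} (hz0 : z ≠ 0) (hz : |z| < 1) :
    HasSum (fun n : ℕ => (n : ℝ) * z ^ (n - 1) / (n : ℝ) ^ 2) (-log (1 - z) / z) := by
  refine (hasSum_nat_add_iff' 1).1 ?_
  simp only [Finset.sum_range_one, Nat.cast_zero, zero_mul, zero_div, sub_zero]
  refine ((hasSum_pow_div_log_of_abs_lt_one hz).div_const z).congr_fun fun n => ?_
  push_cast
  field_simp
  ring

lemma hasDerivAt_Li2 {z : ℝ} (hz0 : z ≠ 0) (hz : |z| < 1) :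
    HasDerivAt Li2 (-log (1 - z) / z) z :=
  (hasSum_natCast_mul_pow_pred_div_sq hz0 hz).tsum_eq ▸ hasDerivAt_Li2_tsum hz

lemma hasDerivAt_Li2_exp {z : ℝ} (hz : z < 0) :
    HasDerivAt Li2 (-log (1 - exp z) / exp z) (exp z) :=
  hasDerivAt_Li2 (exp_pos z).ne' (by rw [abs_of_pos (exp_pos z)]; exact exp_lt_one_iff.2 hz)

section CoshRelation

variable {p q : ℝ}

lemma one_sub_exp_mul_one_sub_exp (h : cosh p = cosh q - 1 / 2) :
    (1 - exp (-p - q)) * (1 - exp (p - q)) = exp (-q) := by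
  rw [cosh_eq, cosh_eq, exp_neg, exp_neg] at h
  rw [sub_eq_add_neg (-p), exp_add, exp_sub, exp_neg, exp_neg]
  field_simp at h ⊢
  linear_combination -h

lemma one_sub_exp_neg_sub_ne_zero (h : cosh p = cosh q - 1 / 2) : 1 - exp (-p - q) ≠ 0 :=
  left_ne_zero_of_mul ((one_sub_exp_mul_one_sub_exp h).symm ▸ (exp_pos _).ne')

lemma one_sub_exp_sub_ne_zero (h : cosh p = cosh q - 1 / 2) : 1 - exp (p - q) ≠ 0 :=
  right_ne_zero_of_mul ((one_sub_exp_mul_one_sub_exp h).symm ▸ (exp_pos _).ne')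

lemma log_one_sub_exp_add_log_one_sub_exp (h : cosh p = cosh q - 1 / 2) :
    log (1 - exp (-p - q)) + log (1 - exp (p - q)) = -q := by
  rw [← log_mul (one_sub_exp_neg_sub_ne_zero h) (one_sub_exp_sub_ne_zero h),
    one_sub_exp_mul_one_sub_exp h, log_exp]

lemma log_exp_sub_div_one_sub_exp (h : cosh p = cosh q - 1 / 2) :
    log ((exp p - exp (-q)) / (1 - exp (p - q))) =
      p + log (1 - exp (-p - q)) - log (1 - exp (p - q)) := by
  have hnum : exp p - exp (-q) = exp p * (1 - exp (-p - q)) := by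
    rw [mul_sub, mul_one, ← exp_add]; ring_nf
  rw [hnum, log_div (mul_ne_zero (exp_pos _).ne' (one_sub_exp_neg_sub_ne_zero h))
    (one_sub_exp_sub_ne_zero h), log_mul (exp_pos _).ne' (one_sub_exp_neg_sub_ne_zero h), log_exp]

lemma exp_sub_div_one_sub_exp (h : cosh p = cosh q - 1 / 2) :
    (exp p - exp (-q)) / (1 - exp (p - q)) = 2 * cosh (p + q) - 2 := by
  rw [div_eq_iff (one_sub_exp_sub_ne_zero h), cosh_eq]
  rw [cosh_eq, cosh_eq, exp_neg, exp_neg] at h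
  rw [exp_sub, exp_neg, exp_neg, exp_add]
  field_simp at h ⊢
  linear_combination (exp p * exp q - 1) * h

end CoshRelation

section Phi

variable {u : ℝ}

lemma arcosh_three_halves_lt (hu : kappa < u) : Real.arcosh (3 / 2) < 2 * u := by
  rw [kappa, arcosh_eq_real_arcosh] at hu; linarith

lemma one_lt_cosh_two_mul_sub (hu : kappa < u) : 1 < cosh (2 * u) - 1 / 2 := by
  have h32 : (1 : ℝ) ≤ 3 / 2 := by norm_num
  have hk0 := Real.arcosh_nonneg h32
  have hk := arcosh_three_halves_lt hu
  have : cosh (Real.arcosh (3 / 2)) < cosh (2 * u) := by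
    rwa [cosh_lt_cosh, abs_of_nonneg hk0, abs_of_pos (hk0.trans_lt hk)]
  rw [Real.cosh_arcosh h32] at this
  linarith

lemma cosh_phi (hu : kappa < u) : cosh (phi u) = cosh (2 * u) - 1 / 2 :=
  Real.cosh_arcosh (one_lt_cosh_two_mul_sub hu).le

lemma phi_pos (hu : kappa < u) : 0 < phi u :=
  Real.arcosh_pos (one_lt_cosh_two_mul_sub hu)

lemma phi_lt_two_mul (hu : kappa < u) : phi u < 2 * u := by
  have h2u : 0 < 2 * u :=
    (Real.arcosh_nonneg (by norm_num : (1 : ℝ) ≤ 3 / 2)).trans_lt (arcosh_three_halves_lt hu)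
  have h : cosh (phi u) < cosh (2 * u) := by rw [cosh_phi hu]; linarith
  rwa [cosh_lt_cosh, abs_of_pos (phi_pos hu), abs_of_pos h2u] at h

lemma differentiableAt_phi (hu : kappa < u) : DifferentiableAt ℝ phi u :=
  (Real.differentiableAt_arcosh (one_lt_cosh_two_mul_sub hu)).comp u (by fun_prop)

lemma two_mul_cosh_phi_add_sub_two (hu : kappa < u) : 2 * cosh (phi u + 2 * u) - 2 = ell u := by
  set C := cosh (2 * u)
  have hsinh : sinh (phi u) = √((2 * C + 1) * (2 * C - 3)) / 2 := by
    rw [phi, arcosh_eq_real_arcosh, Real.sinh_arcosh (one_lt_cosh_two_mul_sub hu).le,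
      show (2 * C + 1) * (2 * C - 3) = 2 ^ 2 * ((C - 1 / 2) ^ 2 - 1) by ring,
      Real.sqrt_mul (by norm_num), Real.sqrt_sq (by norm_num)]
    ring
  rw [ell, cosh_add, hsinh, cosh_phi hu, show 4 * u = 2 * (2 * u) by ring, cosh_two_mul (2 * u),
    sinh_sq (2 * u)]
  ring

lemma hasDerivAt_Sfun (hu : kappa < u) :
    HasDerivAt Sfun
      (2 * log ((exp (phi u) - exp (-(2 * u))) / (1 - exp (phi u - 2 * u)))) u := by
  obtain ⟨P, hP⟩ : ∃ P, HasDerivAt phi P u := ⟨_, (differentiableAt_phi hu).hasDerivAt⟩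
  have h2 : HasDerivAt (fun x : ℝ => 2 * x) 2 u := by simpa using (hasDerivAt_id u).const_mul 2
  have hA : HasDerivAt (fun x => exp (-phi x - 2 * x)) (exp (-phi u - 2 * u) * (-P - 2)) u :=
    (hP.neg.sub h2).exp
  have hB : HasDerivAt (fun x => exp (phi x - 2 * x)) (exp (phi u - 2 * u) * (P - 2)) u :=
    (hP.sub h2).exp
  have hLa := hasDerivAt_Li2_exp (by linarith [phi_pos hu, phi_lt_two_mul hu] :
    -phi u - 2 * u < 0)
  have hLb := hasDerivAt_Li2_exp (by linarith [phi_lt_two_mul hu] : phi u - 2 * u < 0)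
  have hS := ((hLa.comp u hA).sub (hLb.comp u hB)).add (h2.mul hP)
  refine (show HasDerivAt Sfun _ u from hS).congr_deriv ?_
  have ha0 : exp (-phi u - 2 * u) ≠ 0 := (exp_pos _).ne'
  have hb0 : exp (phi u - 2 * u) ≠ 0 := (exp_pos _).ne'
  rw [log_exp_sub_div_one_sub_exp (cosh_phi hu)]
  field_simp
  linear_combination P * log_one_sub_exp_add_log_one_sub_exp (cosh_phi hu)

end Phi

theorem stmt15 :
    DifferentiableOn ℝ Sfun (Set.Ioi kappa) ∧
    ∀ u ∈ Set.Ioi kappa,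
      deriv Sfun u =
        2 * Real.log ((Real.exp (phi u) - Real.exp (-(2*u))) / (1 - Real.exp (phi u - 2*u))) ∧
      2 * Real.log ((Real.exp (phi u) - Real.exp (-(2*u))) / (1 - Real.exp (phi u - 2*u))) =
        2 * Real.log (ell u) := by
  refine ⟨fun u hu => (hasDerivAt_Sfun hu).differentiableAt.differentiableWithinAt,
    fun u hu => ⟨(hasDerivAt_Sfun hu).deriv, ?_⟩⟩
  rw [exp_sub_div_one_sub_exp (cosh_phi hu), two_mul_cosh_phi_add_sub_two hu]
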